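/- Fix a real number q with 0 < q < 1 and real parameters γ₁, γ₂ > 0, c₁, c₂ ∈ ℝ, and set d₁ = q^{−2c₁γ₁}, d₂ = q^{−c₂γ₁−c₁γ₂}, d₃ = [γ₁]_q^{1/2}[γ₂]_q^{−1/2}. Define the 6×6 complex matrices σ₁ with rows (−d₁q^{−2γ₁}, 0, 0, d₁d₃^{−1}q^{−γ₁}, 0, 0), (0, 0, −d₂q^{−γ₁−γ₂}, 0, 0, d₂d₃q^{−γ₂}), (0, −d₂q^{−γ₁−γ₂}, 0, 0, d₂q^{−γ₁}, 0), (0, 0, 0, d₁, 0, 0), (0, 0, 0, 0, 0, d₂d₃), (0, 0, 0, 0, d₂d₃^{−1}, 0), and σ₂ with rows (0, d₂d₃^{−1}, 0, 0, 0, 0), (d₂d₃, 0, 0, 0, 0, 0), (0, 0, d₁, 0, 0, 0), (0, d₂q^{−γ₁}, 0, 0, −d₂q^{−γ₁−γ₂}, 0), (d₂d₃q^{−γ₂}, 0, 0, −d₂q^{−γ₁−γ₂}, 0, 0), (0, 0, d₁d₃^{−1}q^{−γ₁}, 0, 0, −d₁q^{−2γ₁}). Then σ₁ and σ₂ are invertible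 and satisfy the braid relation σ₁σ₂σ₁ = σ₂σ₁σ₂, so they define a representation of the braid group B₃. -/
import Mathlib


noncomputable section

/-- The `q`-number `[γ]_q = (q^γ - q^(-γ))/(q - q⁻¹)`. -/
def qnum (q γ : ℝ) : ℝ := (q ^ γ - q ^ (-γ)) / (q - q⁻¹)

/-- `d₁ = q^{−2c₁γ₁}`. -/
def d1 (q γ₁ c₁ : ℝ) : ℝ := q ^ (-(2 * c₁ * γ₁))

/-- `d₂ = q^{−c₂γ₁−c₁γ₂}`. -/
def d2 (q γ₁ γ₂ c₁ c₂ : ℝ) : ℝ := q ^ (-(c₂ * γ₁) - c₁ * γ₂)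

/-- `d₃ = [γ₁]_q^{1/2} [γ₂]_q^{−1/2}`. -/
def d3 (q γ₁ γ₂ : ℝ) : ℝ := Real.sqrt (qnum q γ₁) * (Real.sqrt (qnum q γ₂))⁻¹

/-- The matrix `σ₁` of the braid generator on the `N = 1` lowest weight space for `n = 3`. -/
def sigma1 (q γ₁ γ₂ c₁ c₂ : ℝ) : Matrix (Fin 6) (Fin 6) ℂ :=
  !![((-(d1 q γ₁ c₁ * q ^ (-(2 * γ₁))) : ℝ) : ℂ), 0, 0,
      ((d1 q γ₁ c₁ * (d3 q γ₁ γ₂)⁻¹ * q ^ (-γ₁) : ℝ) : ℂ), 0, 0;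
    0, 0, ((-(d2 q γ₁ γ₂ c₁ c₂ * q ^ (-γ₁ - γ₂)) : ℝ) : ℂ), 0, 0,
      ((d2 q γ₁ γ₂ c₁ c₂ * d3 q γ₁ γ₂ * q ^ (-γ₂) : ℝ) : ℂ);
    0, ((-(d2 q γ₁ γ₂ c₁ c₂ * q ^ (-γ₁ - γ₂)) : ℝ) : ℂ), 0, 0,
      ((d2 q γ₁ γ₂ c₁ c₂ * q ^ (-γ₁) : ℝ) : ℂ), 0;
    0, 0, 0, ((d1 q γ₁ c₁ : ℝ) : ℂ), 0, 0;
    0, 0, 0, 0, 0, ((d2 q γ₁ γ₂ c₁ c₂ * d3 q γ₁ γ₂ : ℝ) : ℂ);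
    0, 0, 0, 0, ((d2 q γ₁ γ₂ c₁ c₂ * (d3 q γ₁ γ₂)⁻¹ : ℝ) : ℂ), 0]

/-- The matrix `σ₂` of the braid generator on the `N = 1` lowest weight space for `n = 3`. -/
def sigma2 (q γ₁ γ₂ c₁ c₂ : ℝ) : Matrix (Fin 6) (Fin 6) ℂ :=
  !![0, ((d2 q γ₁ γ₂ c₁ c₂ * (d3 q γ₁ γ₂)⁻¹ : ℝ) : ℂ), 0, 0, 0, 0;
    ((d2 q γ₁ γ₂ c₁ c₂ * d3 q γ₁ γ₂ : ℝ) : ℂ), 0, 0, 0, 0, 0;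
    0, 0, ((d1 q γ₁ c₁ : ℝ) : ℂ), 0, 0, 0;
    0, ((d2 q γ₁ γ₂ c₁ c₂ * q ^ (-γ₁) : ℝ) : ℂ), 0, 0,
      ((-(d2 q γ₁ γ₂ c₁ c₂ * q ^ (-γ₁ - γ₂)) : ℝ) : ℂ), 0;
    ((d2 q γ₁ γ₂ c₁ c₂ * d3 q γ₁ γ₂ * q ^ (-γ₂) : ℝ) : ℂ), 0, 0,
      ((-(d2 q γ₁ γ₂ c₁ c₂ * q ^ (-γ₁ - γ₂)) : ℝ) : ℂ), 0, 0;
    0, 0, ((d1 q γ₁ c₁ * (d3 q γ₁ γ₂)⁻¹ * q ^ (-γ₁) : ℝ) : ℂ), 0, 0,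
      ((-(d1 q γ₁ c₁ * q ^ (-(2 * γ₁))) : ℝ) : ℂ)]

/-- The defining relation of the braid group `B₃` on two generators. -/
def braidRel3 : Set (FreeGroup (Fin 2)) :=
  {FreeGroup.of 0 * FreeGroup.of 1 * FreeGroup.of 0 *
    (FreeGroup.of 1 * FreeGroup.of 0 * FreeGroup.of 1)⁻¹}


/-! ### Auxiliary material -/

open Matrix in
theorem cv3' {α : Type*} {m : ℕ} (x : α) (u : Fin m.succ.succ.succ → α) :
    vecCons x u 3 = vecHead (vecTail (vecTail u)) := rfl
open Matrix in
theorem cv4' {α : Type*} {m : ℕ} (x : α) (u : Fin m.succ.succ.succ.succ → α) :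
    vecCons x u 4 = vecHead (vecTail (vecTail (vecTail u))) := rfl
open Matrix in
theorem cv5' {α : Type*} {m : ℕ} (x : α) (u : Fin m.succ.succ.succ.succ.succ → α) :
    vecCons x u 5 = vecHead (vecTail (vecTail (vecTail (vecTail u)))) := rfl

/-- Abstract form of `σ₁`. -/
def M1 (a b t x y : ℂ) : Matrix (Fin 6) (Fin 6) ℂ :=
  !![-(a*x*x), 0, 0, a*t⁻¹*x, 0, 0;
     0, 0, -(b*(x*y)), 0, 0, b*t*y;
     0, -(b*(x*y)), 0, 0, b*x, 0;
     0, 0, 0, a, 0, 0;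
     0, 0, 0, 0, 0, b*t;
     0, 0, 0, 0, b*t⁻¹, 0]

/-- Abstract form of `σ₂`. -/
def M2 (a b t x y : ℂ) : Matrix (Fin 6) (Fin 6) ℂ :=
  !![0, b*t⁻¹, 0, 0, 0, 0;
     b*t, 0, 0, 0, 0, 0;
     0, 0, a, 0, 0, 0;
     0, b*x, 0, 0, -(b*(x*y)), 0;
     b*t*y, 0, 0, -(b*(x*y)), 0, 0;
     0, 0, a*t⁻¹*x, 0, 0, -(a*x*x)]

/-- Explicit inverse of `M1`. -/
def N1 (a b t x y : ℂ) : Matrix (Fin 6) (Fin 6) ℂ :=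
  !![-(a*x*x)⁻¹, 0, 0, (a*t*x)⁻¹, 0, 0;
     0, 0, -(b*x*y)⁻¹, 0, 0, t*(b*y)⁻¹;
     0, -(b*x*y)⁻¹, 0, 0, (b*x)⁻¹, 0;
     0, 0, 0, a⁻¹, 0, 0;
     0, 0, 0, 0, 0, t*b⁻¹;
     0, 0, 0, 0, (b*t)⁻¹, 0]

/-- Explicit inverse of `M2`. -/
def N2 (a b t x y : ℂ) : Matrix (Fin 6) (Fin 6) ℂ :=
  !![0, (b*t)⁻¹, 0, 0, 0, 0;
     t*b⁻¹, 0, 0, 0, 0, 0;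
     0, 0, a⁻¹, 0, 0, 0;
     0, (b*x)⁻¹, 0, 0, -(b*x*y)⁻¹, 0;
     t*(b*y)⁻¹, 0, 0, -(b*x*y)⁻¹, 0, 0;
     0, 0, (a*t*x)⁻¹, 0, 0, -(a*x*x)⁻¹]

set_option maxHeartbeats 1000000 in
lemma M1_inv (a b t x y : ℂ) (ha : a ≠ 0) (hb : b ≠ 0) (ht : t ≠ 0)
    (hx : x ≠ 0) (hy : y ≠ 0) : M1 a b t x y * N1 a b t x y = 1 := by
  ext i j
  fin_cases i <;> fin_cases j <;>
    simp [M1, N1, Matrix.mul_apply, Fin.sum_univ_succ, Matrix.one_apply, cv3', cv4', cv5'] <;>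
    (try field_simp) <;> (try ring)

set_option maxHeartbeats 1000000 in
lemma N1_inv (a b t x y : ℂ) (ha : a ≠ 0) (hb : b ≠ 0) (ht : t ≠ 0)
    (hx : x ≠ 0) (hy : y ≠ 0) : N1 a b t x y * M1 a b t x y = 1 := by
  ext i j
  fin_cases i <;> fin_cases j <;>
    simp [M1, N1, Matrix.mul_apply, Fin.sum_univ_succ, Matrix.one_apply, cv3', cv4', cv5'] <;>
    (try field_simp) <;> (try ring)

set_option maxHeartbeats 1000000 in
lemma M2_inv (a b t x y : ℂ) (ha : a ≠ 0) (hb : b ≠ 0) (ht : t ≠ 0)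
    (hx : x ≠ 0) (hy : y ≠ 0) : M2 a b t x y * N2 a b t x y = 1 := by
  ext i j
  fin_cases i <;> fin_cases j <;>
    simp [M2, N2, Matrix.mul_apply, Fin.sum_univ_succ, Matrix.one_apply, cv3', cv4', cv5'] <;>
    (try field_simp) <;> (try ring)

set_option maxHeartbeats 1000000 in
lemma N2_inv (a b t x y : ℂ) (ha : a ≠ 0) (hb : b ≠ 0) (ht : t ≠ 0)
    (hx : x ≠ 0) (hy : y ≠ 0) : N2 a b t x y * M2 a b t x y = 1 := by
  ext i j
  fin_cases i <;> fin_cases j <;>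
    simp [M2, N2, Matrix.mul_apply, Fin.sum_univ_succ, Matrix.one_apply, cv3', cv4', cv5'] <;>
    (try field_simp) <;> (try ring)

set_option maxHeartbeats 1000000 in
/-- The braid relation for the abstract matrices. -/
lemma braid_aux (a b t x y : ℂ) (ht : t ≠ 0) :
    M1 a b t x y * M2 a b t x y * M1 a b t x y
      = M2 a b t x y * M1 a b t x y * M2 a b t x y := by
  ext i j
  fin_cases i <;> fin_cases j <;>
    simp [M1, M2, Matrix.mul_apply, Fin.sum_univ_succ, cv3', cv4', cv5'] <;>
    (try field_simp) <;> (try ring)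

lemma qnum_pos {q : ℝ} (hq0 : 0 < q) (hq1 : q < 1) {γ : ℝ} (hγ : 0 < γ) :
    0 < qnum q γ := by
  have h1 : q ^ γ < q ^ (-γ) :=
    Real.rpow_lt_rpow_of_exponent_gt hq0 hq1 (by linarith)
  have h2 : q * q⁻¹ = 1 := mul_inv_cancel₀ (ne_of_gt hq0)
  have h3 : q - q⁻¹ < 0 := by nlinarith [sq_nonneg q]
  have h4 : q ^ γ - q ^ (-γ) < 0 := by linarith
  exact div_pos_of_neg_of_neg h4 h3

lemma d3_pos {q : ℝ} (hq0 : 0 < q) (hq1 : q < 1) {γ₁ γ₂ : ℝ} (hγ₁ : 0 < γ₁)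
    (hγ₂ : 0 < γ₂) : 0 < d3 q γ₁ γ₂ :=
  mul_pos (Real.sqrt_pos.2 (qnum_pos hq0 hq1 hγ₁))
    (inv_pos.2 (Real.sqrt_pos.2 (qnum_pos hq0 hq1 hγ₂)))

set_option maxHeartbeats 1000000 in
lemma sigma1_eq (q γ₁ γ₂ c₁ c₂ : ℝ) (hq0 : 0 < q) :
    sigma1 q γ₁ γ₂ c₁ c₂ =
      M1 ((d1 q γ₁ c₁ : ℝ) : ℂ) ((d2 q γ₁ γ₂ c₁ c₂ : ℝ) : ℂ) ((d3 q γ₁ γ₂ : ℝ) : ℂ)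
        ((q ^ (-γ₁) : ℝ) : ℂ) ((q ^ (-γ₂) : ℝ) : ℂ) := by
  have h2 : q ^ (-(2 * γ₁)) = q ^ (-γ₁) * q ^ (-γ₁) := by
    rw [← Real.rpow_add hq0]; ring_nf
  have h12 : q ^ (-γ₁ - γ₂) = q ^ (-γ₁) * q ^ (-γ₂) := by
    rw [← Real.rpow_add hq0]; ring_nf
  ext i j
  fin_cases i <;> fin_cases j <;>
    simp [sigma1, M1, cv3', cv4', cv5', h2, h12] <;> push_cast <;> ring

set_option maxHeartbeats 1000000 in
lemma sigma2_eq (q γ₁ γ₂ c₁ c₂ : ℝ) (hq0 : 0 < q) :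
    sigma2 q γ₁ γ₂ c₁ c₂ =
      M2 ((d1 q γ₁ c₁ : ℝ) : ℂ) ((d2 q γ₁ γ₂ c₁ c₂ : ℝ) : ℂ) ((d3 q γ₁ γ₂ : ℝ) : ℂ)
        ((q ^ (-γ₁) : ℝ) : ℂ) ((q ^ (-γ₂) : ℝ) : ℂ) := by
  have h2 : q ^ (-(2 * γ₁)) = q ^ (-γ₁) * q ^ (-γ₁) := by
    rw [← Real.rpow_add hq0]; ring_nf
  have h12 : q ^ (-γ₁ - γ₂) = q ^ (-γ₁) * q ^ (-γ₂) := by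
    rw [← Real.rpow_add hq0]; ring_nf
  ext i j
  fin_cases i <;> fin_cases j <;>
    simp [sigma2, M2, cv3', cv4', cv5', h2, h12] <;> push_cast <;> ring

/-- the matrices `σ₁, σ₂` are invertible and satisfy the braid relation
`σ₁σ₂σ₁ = σ₂σ₁σ₂`, hence define a representation of the braid group `B₃`. -/
theorem stmt18 (q γ₁ γ₂ c₁ c₂ : ℝ) (hq0 : 0 < q) (hq1 : q < 1)
    (hγ₁ : 0 < γ₁) (hγ₂ : 0 < γ₂) :
    IsUnit (sigma1 q γ₁ γ₂ c₁ c₂) ∧ IsUnit (sigma2 q γ₁ γ₂ c₁ c₂) ∧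
    sigma1 q γ₁ γ₂ c₁ c₂ * sigma2 q γ₁ γ₂ c₁ c₂ * sigma1 q γ₁ γ₂ c₁ c₂ =
      sigma2 q γ₁ γ₂ c₁ c₂ * sigma1 q γ₁ γ₂ c₁ c₂ * sigma2 q γ₁ γ₂ c₁ c₂ ∧
    ∃ ρ : PresentedGroup braidRel3 →* (Matrix (Fin 6) (Fin 6) ℂ)ˣ,
      (↑(ρ (PresentedGroup.of 0)) : Matrix (Fin 6) (Fin 6) ℂ) = sigma1 q γ₁ γ₂ c₁ c₂ ∧
      (↑(ρ (PresentedGroup.of 1)) : Matrix (Fin 6) (Fin 6) ℂ) = sigma2 q γ₁ γ₂ c₁ c₂ := by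
  set a : ℂ := ((d1 q γ₁ c₁ : ℝ) : ℂ) with ha_def
  set b : ℂ := ((d2 q γ₁ γ₂ c₁ c₂ : ℝ) : ℂ) with hb_def
  set t : ℂ := ((d3 q γ₁ γ₂ : ℝ) : ℂ) with ht_def
  set x : ℂ := ((q ^ (-γ₁) : ℝ) : ℂ) with hx_def
  set y : ℂ := ((q ^ (-γ₂) : ℝ) : ℂ) with hy_def
  have ha : a ≠ 0 := by
    simp only [ha_def, ne_eq, Complex.ofReal_eq_zero]
    exact ne_of_gt (Real.rpow_pos_of_pos hq0 _)
  have hb : b ≠ 0 := by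
    simp only [hb_def, ne_eq, Complex.ofReal_eq_zero]
    exact ne_of_gt (Real.rpow_pos_of_pos hq0 _)
  have ht : t ≠ 0 := by
    simp only [ht_def, ne_eq, Complex.ofReal_eq_zero]
    exact ne_of_gt (d3_pos hq0 hq1 hγ₁ hγ₂)
  have hx : x ≠ 0 := by
    simp only [hx_def, ne_eq, Complex.ofReal_eq_zero]
    exact ne_of_gt (Real.rpow_pos_of_pos hq0 _)
  have hy : y ≠ 0 := by
    simp only [hy_def, ne_eq, Complex.ofReal_eq_zero]
    exact ne_of_gt (Real.rpow_pos_of_pos hq0 _)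
  have h1 : sigma1 q γ₁ γ₂ c₁ c₂ = M1 a b t x y := sigma1_eq q γ₁ γ₂ c₁ c₂ hq0
  have h2 : sigma2 q γ₁ γ₂ c₁ c₂ = M2 a b t x y := sigma2_eq q γ₁ γ₂ c₁ c₂ hq0
  -- units
  refine ⟨?_, ?_, ?_, ?_⟩
  · exact ⟨⟨M1 a b t x y, N1 a b t x y, M1_inv a b t x y ha hb ht hx hy,
      N1_inv a b t x y ha hb ht hx hy⟩, h1.symm⟩
  · exact ⟨⟨M2 a b t x y, N2 a b t x y, M2_inv a b t x y ha hb ht hx hy,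
      N2_inv a b t x y ha hb ht hx hy⟩, h2.symm⟩
  · rw [h1, h2]; exact braid_aux a b t x y ht
  · set u1 : (Matrix (Fin 6) (Fin 6) ℂ)ˣ :=
      ⟨M1 a b t x y, N1 a b t x y, M1_inv a b t x y ha hb ht hx hy,
        N1_inv a b t x y ha hb ht hx hy⟩ with hu1
    set u2 : (Matrix (Fin 6) (Fin 6) ℂ)ˣ :=
      ⟨M2 a b t x y, N2 a b t x y, M2_inv a b t x y ha hb ht hx hy,
        N2_inv a b t x y ha hb ht hx hy⟩ with hu2
    have hbraidU : u1 * u2 * u1 = u2 * u1 * u2 := by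
      apply Units.ext
      exact braid_aux a b t x y ht
    have hrel : ∀ r ∈ braidRel3, FreeGroup.lift (![u1, u2] : Fin 2 → _) r = 1 := by
      intro r hr
      simp only [braidRel3, Set.mem_singleton_iff] at hr
      subst hr
      simp only [map_mul, map_inv, FreeGroup.lift_apply_of]
      rw [mul_inv_eq_one]
      simpa using hbraidU
    refine ⟨PresentedGroup.toGroup hrel, ?_, ?_⟩
    · rw [PresentedGroup.toGroup.of]
      simpa using h1.symm
    · rw [PresentedGroup.toGroup.of]
      simpa using h2.symm
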